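/- For any base B, finite set of atoms P, and atom a: P ⊩_B a if and only if P ⊢_B a (support coincides with atomic derivability on atoms). -/
import Mathlib


/-- An atomic rule `((P₁ ⇒ a₁), …, (Pₙ ⇒ aₙ) ⇒ b)`. -/
structure AtomicRule where
  premises : List (Finset ℕ × ℕ)
  concl : ℕ

/-- A base is a set of atomic rules. -/
abbrev Base := Set AtomicRule

/-- Atomic derivability `P ⊢_B a`. -/
inductive Derives (B : Base) : Finset ℕ → ℕ → Prop
  | ref {P : Finset ℕ} {a : ℕ} (h : a ∈ P) : Derives B P a
  | app {r : AtomicRule} (hr : r ∈ B) {Q : Finset ℕ}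
      (h : ∀ pr ∈ r.premises, Derives B (Q ∪ pr.1) pr.2) :
      Derives B Q r.concl

/-- Propositional formulas over atoms `ℕ`. -/
inductive Formula where
  | atom : ℕ → Formula
  | conj : Formula → Formula → Formula
  | disj : Formula → Formula → Formula
  | imp  : Formula → Formula → Formula
  | bot  : Formula

/-- Sandqvist's support relation `⊩_B φ`.  For an atom `a`, support of `a`
at `C` is `Derives C ∅ a` (clause (At)), which is used to unfold the atomic
support occurring in the clauses for `∨` and `⊥`. -/
def Support : Base → Formula → Prop
  | B, .atom a => Derives B ∅ a
  | B, .bot => ∀ a : ℕ, Derives B ∅ a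
  | B, .conj φ ψ => Support B φ ∧ Support B ψ
  | B, .imp φ ψ => ∀ C : Base, B ⊆ C → Support C φ → Support C ψ
  | B, .disj φ ψ => ∀ (a : ℕ) (C : Base), B ⊆ C →
      (∀ D : Base, C ⊆ D → Support D φ → Derives D ∅ a) →
      (∀ D : Base, C ⊆ D → Support D ψ → Derives D ∅ a) →
      Derives C ∅ a

/-- The inference relation `Θ ⊩_B φ` (clause (Inf)). -/
def Inference (B : Base) (Θ : Set Formula) (φ : Formula) : Prop :=
  ∀ C : Base, B ⊆ C → (∀ θ ∈ Θ, Support C θ) → Support C φ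


lemma Derives.mono_base {B C : Base} (hBC : B ⊆ C) {Q : Finset ℕ} {a : ℕ}
    (h : Derives B Q a) : Derives C Q a := by
  induction h with
  | ref h => exact Derives.ref h
  | app hr h ih => exact Derives.app (hBC hr) ih

lemma Derives.mono_ctx {B : Base} {Q Q' : Finset ℕ} {a : ℕ}
    (hQ : Q ⊆ Q') (h : Derives B Q a) : Derives B Q' a := by
  induction h generalizing Q' with
  | ref h => exact Derives.ref (hQ h)
  | app hr h ih =>
      exact Derives.app hr (fun pr hpr =>
        ih pr hpr (Finset.union_subset_union_left hQ))

lemma Derives.cut {B : Base} {R : Finset ℕ} {a : ℕ}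
    (h : Derives B R a) : ∀ (Q P : Finset ℕ), R ⊆ Q ∪ P →
    (∀ p ∈ P, Derives B Q p) → Derives B Q a := by
  induction h with
  | ref h =>
      intro Q P hsub hP
      rcases Finset.mem_union.1 (hsub h) with h' | h'
      · exact Derives.ref h'
      · exact hP _ h'
  | app hr h ih =>
      intro Q P hsub hP
      refine Derives.app hr (fun pr hpr => ?_)
      refine ih pr hpr (Q ∪ pr.1) P ?_ (fun p hp => (hP p hp).mono_ctx Finset.subset_union_left)
      intro x hx
      rcases Finset.mem_union.1 hx with h' | h'
      · rcases Finset.mem_union.1 (hsub h') with h'' | h''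
        · exact Finset.mem_union_left _ (Finset.mem_union_left _ h'')
        · exact Finset.mem_union_right _ h''
      · exact Finset.mem_union_left _ (Finset.mem_union_right _ h')

lemma derives_of_axioms {B : Base} {P : Finset ℕ} {Q : Finset ℕ} {a : ℕ}
    (h : Derives (B ∪ {r : AtomicRule | r.premises = [] ∧ r.concl ∈ P}) Q a) :
    Derives B (Q ∪ P) a := by
  induction h with
  | ref h => exact Derives.ref (Finset.mem_union_left _ h)
  | @app r hr Q h ih =>
      rcases hr with hr | hr
      · refine Derives.app hr (fun pr hpr => ?_)
        refine (ih pr hpr).mono_ctx ?_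
        intro x hx
        rcases Finset.mem_union.1 hx with h' | h'
        · rcases Finset.mem_union.1 h' with h'' | h''
          · exact Finset.mem_union_left _ (Finset.mem_union_left _ h'')
          · exact Finset.mem_union_right _ h''
        · exact Finset.mem_union_left _ (Finset.mem_union_right _ h')
      · exact Derives.ref (Finset.mem_union_right _ hr.2)

/-- On atoms, support coincides with atomic derivability:
`P ⊩_B a` iff `P ⊢_B a`. -/
theorem support_eq_derives_atoms (B : Base) (P : Finset ℕ) (a : ℕ) :
    Inference B {φ | ∃ p ∈ P, φ = Formula.atom p} (Formula.atom a) ↔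
      Derives B P a := by
  constructor
  · intro hInf
    have hC := hInf (B ∪ {r : AtomicRule | r.premises = [] ∧ r.concl ∈ P})
      (Set.subset_union_left) ?_
    · have := derives_of_axioms (P := P) hC
      simpa using this
    · rintro θ ⟨p, hp, rfl⟩
      exact Derives.app (r := ⟨[], p⟩) (Or.inr ⟨rfl, hp⟩) (by simp)
  · intro hD C hBC hP
    have hD' : Derives C P a := hD.mono_base hBC
    refine hD'.cut ∅ P (by simp) (fun p hp => ?_)
    exact hP (Formula.atom p) ⟨p, hp, rfl⟩
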